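/- arXiv:1511.03322 — 2 statements merged into one kernel-verified Lean document; each statement's English description precedes it below -/
import Mathlib

section
/- Let H be a primitive and aperiodic substitution over a finite alphabet A. Let x ∈ A^ℕ \ K with δ(x) = d, and suppose the first accident of x occurs at time b with 0 < b ≤ d. Then the word x_b x_{b+1} ⋯ x_{d−1} is a bispecial word of L_H. -/
open Filter Topology MeasureTheory

variable {A : Type*}

/-- The shift map on infinite words. -/
def shift (x : ℕ → A) : ℕ → A := fun n => x (n + 1)

/-- Image of a finite word under a substitution. -/
def wordMap (H : A → List A) (w : List A) : List A := w.flatMap H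

/-- Image of an infinite word under a substitution (each `H a` nonempty makes this the
infinite concatenation `H(x₀)H(x₁)⋯`). -/
def substSeq (H : A → List A) (x : ℕ → A) : ℕ → A :=
  fun n => (wordMap H ((List.range (n + 1)).map x)).getD n (x 0)

/-- The prefix of length `n` of an infinite word. -/
def prefixWord (x : ℕ → A) (n : ℕ) : List A := (List.range n).map x

/-- The factor of length `n` at position `i` of an infinite word. -/
def factorAt (x : ℕ → A) (i n : ℕ) : List A := (List.range n).map fun j => x (i + j)

/-- The language of an infinite word: the set of its finite factors. -/
def Lang (u : ℕ → A) : Set (List A) := {w | ∃ i, w = factorAt u i w.length}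

/-- A sequence is (purely) periodic for the shift. -/
def PeriodicSeq (x : ℕ → A) : Prop := ∃ m, 0 < m ∧ ∀ n, x (n + m) = x n

/-- `u` is a fixed point of the substitution `H`. -/
def IsFixedPointSubst (H : A → List A) (u : ℕ → A) : Prop := substSeq H u = u

/-- `H` is primitive: some power of `H` maps every letter onto a word containing
every letter. -/
def PrimitiveSubst (H : A → List A) : Prop :=
  ∃ k, 0 < k ∧ ∀ a b : A, b ∈ (wordMap H)^[k] [a]

/-- `H` is aperiodic: no fixed point of `H` is periodic for the shift. -/
def AperiodicSubst (H : A → List A) : Prop :=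
  ∀ u : ℕ → A, IsFixedPointSubst H u → ¬ PeriodicSeq u

/-- `H` is marked: first letters of images are pairwise distinct, and so are last letters. -/
def MarkedSubst (H : A → List A) (hne : ∀ a, H a ≠ []) : Prop :=
  Function.Injective (fun a => (H a).head (hne a)) ∧
  Function.Injective (fun a => (H a).getLast (hne a))

/-- `H` is 2-full (with respect to the fixed point `u`): every word of length 2 belongs
to the language. -/
def TwoFull (H : A → List A) (u : ℕ → A) : Prop :=
  ∀ w : List A, w.length = 2 → w ∈ Lang u

/-- The attractor `K`: closure of the shift-orbit of the fixed point `u`. -/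
def orbitClosure [TopologicalSpace A] (u : ℕ → A) : Set (ℕ → A) :=
  closure {y | ∃ n, y = shift^[n] u}

/-- `δ(x)`: the length of the maximal prefix of `x` belonging to the language of `u`. -/
noncomputable def delta (u x : ℕ → A) : ℕ := sSup {n | prefixWord x n ∈ Lang u}

/-- The renormalization operator `R`. -/
noncomputable def renorm (H : A → List A) (V : (ℕ → A) → ℝ) : (ℕ → A) → ℝ :=
  fun x => ∑ i ∈ Finset.range (H (x 0)).length, V (shift^[i] (substSeq H x))

/-- `t_n(x) = |H^n(x₀)|`. -/
def tlen (H : A → List A) (n : ℕ) (x : ℕ → A) : ℕ := ((wordMap H)^[n] [x 0]).length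

/-- An accident occurs at time `b`. -/
def AccidentAt (u x : ℕ → A) (b : ℕ) : Prop :=
  0 < b ∧ delta u x - b < delta u (shift^[b] x) ∧
    ∀ i < b, delta u (shift^[i] x) = delta u x - i

/-- The first accident time of `x` (junk value `0` if there is none). -/
noncomputable def firstAccident (u x : ℕ → A) : ℕ := sInf {b | AccidentAt u x b}

/-- The `j`-th accident time `B_j` of `x`, defined inductively. -/
noncomputable def accidentTime (u x : ℕ → A) : ℕ → ℕ
  | 0 => 0
  | j + 1 => accidentTime u x j + firstAccident u (shift^[accidentTime u x j] x)

/-- The set of (genuine) accident times of `x`. -/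
def AccidentSet (u x : ℕ → A) : Set ℕ :=
  {B | ∃ j : ℕ, B = accidentTime u x (j + 1) ∧
        AccidentAt u (shift^[accidentTime u x j] x)
          (firstAccident u (shift^[accidentTime u x j] x))}

/-- A word is right special. -/
def RightSpecial (u : ℕ → A) (w : List A) : Prop :=
  ∃ b c : A, b ≠ c ∧ w ++ [b] ∈ Lang u ∧ w ++ [c] ∈ Lang u

/-- A word is left special. -/
def LeftSpecial (u : ℕ → A) (w : List A) : Prop :=
  ∃ a b : A, a ≠ b ∧ a :: w ∈ Lang u ∧ b :: w ∈ Lang u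

/-- A word is bispecial. -/
def Bispecial (u : ℕ → A) (w : List A) : Prop := RightSpecial u w ∧ LeftSpecial u w

/-- `l` is a recognizability constant for `H`: every long enough word of the language
admits a unique desubstitution. -/
def RecogBound (H : A → List A) (u : ℕ → A) (l : ℕ) : Prop :=
  ∀ z ∈ Lang u, l < z.length →
    ∃! d : List A × List A × List A,
      ∃ s p : A,
        z = d.1 ++ wordMap H d.2.1 ++ d.2.2 ∧
        d.2.1 ∈ Lang u ∧
        d.1 <:+ H s ∧ d.1.length < (H s).length ∧
        d.2.2 <+: H p ∧ d.2.2.length < (H p).length ∧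
        ([s] ++ d.2.1 ++ [p]) ∈ Lang u

/-- The incidence matrix of a substitution, with real entries. -/
def incMat [Fintype A] [DecidableEq A] (H : A → List A) : Matrix A A ℝ :=
  fun a b => ((H a).count b : ℝ)

/-- `lam` is the Perron–Frobenius eigenvalue of the incidence matrix of the (primitive)
substitution `H`: it admits an entrywise positive eigenvector. -/
def IsPerronValue [Fintype A] [DecidableEq A] (H : A → List A) (lam : ℝ) : Prop :=
  ∃ v : A → ℝ, (∀ a, 0 < v a) ∧ (incMat H).mulVec v = lam • v

/-- Concatenation of a finite word with an infinite word. -/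
def catWord (S : List A) (y : ℕ → A) : ℕ → A :=
  fun n => S.getD n (y (n - S.length))

/-! The word `w = x_b ⋯ x_{d-1}` is flanked in `x` by `a = x_{b-1}` and `c = x_d`. Since no
accident happens before `b`, the word `a w` lies in the language but `a w c` does not; the
accident at `b` says that `w c` lies in the language. Extending `a w` to the right inside the
fixed point gives a letter `c' ≠ c` after `w`, and extending `w c` to the left, which is
possible because the fixed point of a primitive substitution is recurrent, gives a letter
`a' ≠ a` before `w`. -/

section Words

variable {u x : ℕ → A}

lemma shift_iterate_apply (x : ℕ → A) (j n : ℕ) : shift^[j] x n = x (j + n) := by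
  induction j generalizing n with
  | zero => simp
  | succ j ih =>
    rw [Function.iterate_succ_apply', shift, ih]
    ring_nf

@[simp]
lemma factorAt_length (x : ℕ → A) (i n : ℕ) : (factorAt x i n).length = n := by
  simp [factorAt]

@[simp]
lemma factorAt_one (x : ℕ → A) (i : ℕ) : factorAt x i 1 = [x i] := by
  simp [factorAt]

lemma factorAt_add (x : ℕ → A) (i m n : ℕ) :
    factorAt x i (m + n) = factorAt x i m ++ factorAt x (i + m) n := by
  simp [factorAt, List.range_add, Nat.add_assoc]

@[simp]
lemma prefixWord_length (x : ℕ → A) (n : ℕ) : (prefixWord x n).length = n := by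
  simp [prefixWord]

lemma prefixWord_eq_factorAt (x : ℕ → A) (n : ℕ) : prefixWord x n = factorAt x 0 n := by
  simp [prefixWord, factorAt]

lemma prefixWord_shift_iterate (x : ℕ → A) (j n : ℕ) :
    prefixWord (shift^[j] x) n = factorAt x j n := by
  simp [prefixWord, factorAt, shift_iterate_apply]

lemma prefixWord_prefix (x : ℕ → A) {m n : ℕ} (h : m ≤ n) :
    prefixWord x m <+: prefixWord x n :=
  ⟨factorAt x m (n - m), by
    simpa [prefixWord_eq_factorAt, Nat.add_sub_cancel' h] using (factorAt_add x 0 m (n - m)).symm⟩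

lemma factorAt_eq_of_append_eq {p q r : List A} {i n : ℕ} (h : p ++ q ++ r = factorAt x i n) :
    q = factorAt x (i + p.length) q.length := by
  have hn : n = p.length + q.length + r.length := by
    simpa [Nat.add_assoc] using (congrArg List.length h).symm
  rw [hn, factorAt_add, factorAt_add] at h
  exact (List.append_inj (List.append_inj' h (by simp)).1 (by simp)).2

lemma Lang.of_infix {v w : List A} (hw : w ∈ Lang u) (hvw : v <:+: w) : v ∈ Lang u := by
  obtain ⟨p, r, rfl⟩ := hvw
  obtain ⟨i, hi⟩ := hw
  exact ⟨_, factorAt_eq_of_append_eq hi⟩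

lemma Lang.exists_append_mem {w : List A} (hw : w ∈ Lang u) : ∃ c, w ++ [c] ∈ Lang u := by
  obtain ⟨i, hi⟩ := hw
  refine ⟨u (i + w.length), i, ?_⟩
  rw [List.length_append, List.length_singleton, factorAt_add, ← hi, factorAt_one]

end Words

section Delta

variable {u x : ℕ → A}

lemma bddAbove_of_delta_pos (h : 0 < delta u x) :
    BddAbove {n | prefixWord x n ∈ Lang u} := by
  by_contra hb
  rw [delta, csSup_of_not_bddAbove hb, csSup_empty] at h
  exact h.ne rfl

lemma prefixWord_mem_Lang_iff_le_delta (hpos : 0 < delta u x) {q : ℕ} :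
    prefixWord x q ∈ Lang u ↔ q ≤ delta u x := by
  refine ⟨fun hq => le_csSup (bddAbove_of_delta_pos hpos) hq, fun hq => ?_⟩
  have hmem : prefixWord x (delta u x) ∈ Lang u :=
    Nat.sSup_mem (s := {n | prefixWord x n ∈ Lang u}) ⟨0, 0, rfl⟩ (bddAbove_of_delta_pos hpos)
  exact Lang.of_infix hmem (prefixWord_prefix x hq).isInfix

end Delta

section Substitution

variable {H : A → List A} {u : ℕ → A}

lemma wordMap_append (H : A → List A) (s t : List A) :
    wordMap H (s ++ t) = wordMap H s ++ wordMap H t :=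
  List.flatMap_append

lemma iterate_wordMap (H : A → List A) (k : ℕ) :
    (wordMap H)^[k] = wordMap fun a => (wordMap H)^[k] [a] := by
  induction k with
  | zero => funext w; simp [wordMap]
  | succ k ih =>
    funext w
    simp only [Function.iterate_succ_apply]
    rw [ih]
    simp [wordMap, List.flatMap_assoc]

lemma iterate_wordMap_append (H : A → List A) (k : ℕ) (s t : List A) :
    (wordMap H)^[k] (s ++ t) = (wordMap H)^[k] s ++ (wordMap H)^[k] t := by
  rw [iterate_wordMap, wordMap_append]

lemma mul_length_le_length_wordMap {c : ℕ} (h : ∀ a, c ≤ (H a).length) (w : List A) :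
    c * w.length ≤ (wordMap H w).length := by
  induction w with
  | nil => simp
  | cons a w ih =>
    simp only [wordMap, List.flatMap_cons, List.length_append, List.length_cons] at ih ⊢
    linarith [h a]

lemma pow_mul_length_le_length_iterate_wordMap {c : ℕ} (h : ∀ a, c ≤ (H a).length) (j : ℕ)
    (w : List A) : c ^ j * w.length ≤ ((wordMap H)^[j] w).length := by
  induction j with
  | zero => simp
  | succ j ih =>
    rw [Function.iterate_succ_apply', pow_succ', Nat.mul_assoc]
    exact (Nat.mul_le_mul_left c ih).trans (mul_length_le_length_wordMap h _)

lemma length_le_length_iterate_wordMap (hne : ∀ a, H a ≠ []) (j : ℕ) (w : List A) :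
    w.length ≤ ((wordMap H)^[j] w).length := by
  simpa using
    pow_mul_length_le_length_iterate_wordMap (fun a => List.length_pos_iff.mpr (hne a)) j w

lemma PrimitiveSubst.exists_le_length_iterate [Fintype A] (hprim : PrimitiveSubst H)
    (hD : 2 ≤ Fintype.card A) (a : A) (N : ℕ) : ∃ m, N ≤ ((wordMap H)^[m] [a]).length := by
  obtain ⟨k, -, hall⟩ := hprim
  obtain ⟨b, c, hbc⟩ := Fintype.exists_pair_of_one_lt_card hD
  have htwo : ∀ a, 2 ≤ ((wordMap H)^[k] [a]).length := fun a =>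
    (List.subperm_of_subset (l₁ := [b, c]) (by simpa using hbc)
      (by simp [List.subset_def, hall a b, hall a c])).length_le
  refine ⟨k * N, ?_⟩
  rw [Function.iterate_mul, iterate_wordMap H k]
  have := pow_mul_length_le_length_iterate_wordMap htwo N [a]
  simp only [List.length_singleton, Nat.mul_one] at this
  exact Nat.lt_two_pow_self.le.trans this

lemma IsFixedPointSubst.wordMap_prefixWord (hu : IsFixedPointSubst H u) (hne : ∀ a, H a ≠ [])
    (m : ℕ) : wordMap H (prefixWord u m) = prefixWord u (wordMap H (prefixWord u m)).length := by
  apply List.ext_getElem (by simp [prefixWord])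
  intro n hn _
  have hn' : n < (wordMap H (prefixWord u (n + 1))).length :=
    (by simp [prefixWord] : n < (prefixWord u (n + 1)).length).trans_le
      (length_le_length_iterate_wordMap hne 1 _)
  have hm : wordMap H (prefixWord u m) <+: wordMap H (prefixWord u (max m (n + 1))) :=
    (prefixWord_prefix u (le_max_left _ _)).flatMap H
  have hn1 : wordMap H (prefixWord u (n + 1)) <+: wordMap H (prefixWord u (max m (n + 1))) :=
    (prefixWord_prefix u (le_max_right _ _)).flatMap H
  rw [hm.getElem hn, ← hn1.getElem hn', ← List.getD_eq_getElem _ (u 0) hn']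
  simp only [prefixWord, List.getElem_map, List.getElem_range]
  exact congrFun hu n

lemma IsFixedPointSubst.iterate_wordMap_prefixWord (hu : IsFixedPointSubst H u)
    (hne : ∀ a, H a ≠ []) (m j : ℕ) :
    (wordMap H)^[m] (prefixWord u j) = prefixWord u ((wordMap H)^[m] (prefixWord u j)).length := by
  induction m with
  | zero => simp [prefixWord]
  | succ m ih =>
    rw [Function.iterate_succ_apply', ih]
    exact hu.wordMap_prefixWord hne _

/-- `u₀` occurs in some `H^k(u₁)`, so the long prefix `H^m(u₀)` of `u` occurs inside
`H^{m+k}(u₁)`, which follows the nonempty word `H^{m+k}(u₀)` in `u`. -/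
lemma IsFixedPointSubst.exists_pos_factorAt_eq_prefixWord [Fintype A]
    (hu : IsFixedPointSubst H u) (hne : ∀ a, H a ≠ []) (hprim : PrimitiveSubst H)
    (hD : 2 ≤ Fintype.card A) (N : ℕ) : ∃ c, 0 < c ∧ factorAt u c N = prefixWord u N := by
  obtain ⟨m, hm⟩ := hprim.exists_le_length_iterate hD (u 0) N
  obtain ⟨k, -, hall⟩ := hprim
  obtain ⟨s, t, hst⟩ := List.append_of_mem (hall (u 1) (u 0))
  have hP : (wordMap H)^[m] [u 0] = prefixWord u ((wordMap H)^[m] [u 0]).length :=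
    hu.iterate_wordMap_prefixWord hne m 1
  obtain ⟨r, hr⟩ : prefixWord u N <+: (wordMap H)^[m] [u 0] := by
    rw [hP]
    exact prefixWord_prefix u hm
  set p := (wordMap H)^[m + k] [u 0] ++ (wordMap H)^[m] s
  have hsplit : p ++ prefixWord u N ++ (r ++ (wordMap H)^[m] t) =
      factorAt u 0 ((wordMap H)^[m + k] (prefixWord u 2)).length := by
    rw [← prefixWord_eq_factorAt, ← hu.iterate_wordMap_prefixWord hne,
      show prefixWord u 2 = [u 0] ++ [u 1] from rfl, iterate_wordMap_append,
      Function.iterate_add_apply _ m k [u 1], hst, show s ++ u 0 :: t = s ++ [u 0] ++ t by simp]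
    simp only [p, iterate_wordMap_append, ← hr, List.append_assoc]
  refine ⟨p.length, ?_, by simpa using (factorAt_eq_of_append_eq hsplit).symm⟩
  have := length_le_length_iterate_wordMap hne (m + k) [u 0]
  simp only [p, List.length_append, List.length_singleton] at this ⊢
  omega

lemma IsFixedPointSubst.exists_cons_mem_Lang [Fintype A] (hu : IsFixedPointSubst H u)
    (hne : ∀ a, H a ≠ []) (hprim : PrimitiveSubst H) (hD : 2 ≤ Fintype.card A) {v : List A}
    (hv : v ∈ Lang u) : ∃ a, a :: v ∈ Lang u := by
  obtain ⟨i, hi⟩ := hv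
  obtain ⟨c, hc, hcv⟩ := hu.exists_pos_factorAt_eq_prefixWord hne hprim hD (i + v.length)
  have hsplit : factorAt u 0 i ++ v ++ [] = factorAt u c (i + v.length) := by
    rw [List.append_nil, hcv, prefixWord_eq_factorAt, factorAt_add, Nat.zero_add, ← hi]
  have hocc : v = factorAt u (c + i) v.length := by
    simpa using factorAt_eq_of_append_eq hsplit
  refine ⟨u (c + i - 1), c + i - 1, ?_⟩
  rw [List.length_cons, Nat.add_comm v.length, factorAt_add, factorAt_one,
    Nat.sub_add_cancel (by omega), ← hocc]
  rfl

end Substitution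

section Special

variable {u : ℕ → A} {a c : A} {w : List A}

lemma rightSpecial_of_cons_append_not_mem (hl : a :: w ∈ Lang u) (hr : w ++ [c] ∈ Lang u)
    (hlr : a :: (w ++ [c]) ∉ Lang u) : RightSpecial u w := by
  obtain ⟨c', hc'⟩ := Lang.exists_append_mem hl
  refine ⟨c, c', ?_, hr, Lang.of_infix hc' (List.suffix_cons a _).isInfix⟩
  rintro rfl
  exact hlr hc'

lemma leftSpecial_of_cons_append_not_mem (hext : ∀ v ∈ Lang u, ∃ a', a' :: v ∈ Lang u)
    (hl : a :: w ∈ Lang u) (hr : w ++ [c] ∈ Lang u) (hlr : a :: (w ++ [c]) ∉ Lang u) :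
    LeftSpecial u w := by
  obtain ⟨a', ha'⟩ := hext _ hr
  refine ⟨a', a, ?_, Lang.of_infix ha' (List.prefix_append (a' :: w) [c]).isInfix, hl⟩
  rintro rfl
  exact hlr ha'

lemma bispecial_of_cons_append_not_mem (hext : ∀ v ∈ Lang u, ∃ a', a' :: v ∈ Lang u)
    (hl : a :: w ∈ Lang u) (hr : w ++ [c] ∈ Lang u) (hlr : a :: (w ++ [c]) ∉ Lang u) :
    Bispecial u w :=
  ⟨rightSpecial_of_cons_append_not_mem hl hr hlr,
    leftSpecial_of_cons_append_not_mem hext hl hr hlr⟩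

end Special

theorem accident_bispecial_general
    {A : Type*} [Fintype A]
    (hD : 2 ≤ Fintype.card A)
    (H : A → List A) (hne : ∀ a, H a ≠ [])
    (hprim : PrimitiveSubst H)
    (u : ℕ → A) (hu : IsFixedPointSubst H u)
    (x : ℕ → A)
    (d b : ℕ) (hd : delta u x = d)
    (hacc : AccidentAt u x b) (hbd : b ≤ d) :
    Bispecial u (factorAt x b (d - b)) := by
  obtain ⟨hb, hgrow, hdrop⟩ := hacc
  obtain ⟨i, rfl⟩ : ∃ i, b = i + 1 := ⟨b - 1, by omega⟩
  subst hd
  set n := delta u x - (i + 1)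
  have hprev : delta u (shift^[i] x) = n + 1 := by rw [hdrop i (by omega)]; omega
  have hnext : n + 1 ≤ delta u (shift^[i + 1] x) := by omega
  have hl : factorAt x i (1 + n) ∈ Lang u := by
    rw [← prefixWord_shift_iterate, prefixWord_mem_Lang_iff_le_delta (by omega)]; omega
  have hlr : factorAt x i (1 + n + 1) ∉ Lang u := by
    rw [← prefixWord_shift_iterate, prefixWord_mem_Lang_iff_le_delta (by omega)]; omega
  have hr : factorAt x (i + 1) (n + 1) ∈ Lang u := by
    rw [← prefixWord_shift_iterate, prefixWord_mem_Lang_iff_le_delta (by omega)]; omega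
  simp only [factorAt_add, factorAt_one, Nat.add_assoc] at hl hlr hr
  exact bispecial_of_cons_append_not_mem (fun _ => hu.exists_cons_mem_Lang hne hprim hD)
    hl hr hlr

/-- If the first accident of `x ∉ K` occurs at time `b` with
`0 < b ≤ d = δ(x)`, then the word `x_b ⋯ x_{d-1}` is bispecial. -/
theorem accident_bispecial
    {A : Type*} [Fintype A] [DecidableEq A] [TopologicalSpace A] [DiscreteTopology A]
    (hD : 2 ≤ Fintype.card A)
    (H : A → List A) (hne : ∀ a, H a ≠ [])
    (hprim : PrimitiveSubst H) (haper : AperiodicSubst H)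
    (u : ℕ → A) (hu : IsFixedPointSubst H u)
    (x : ℕ → A) (hx : x ∉ orbitClosure u)
    (d b : ℕ) (hd : delta u x = d)
    (hacc : AccidentAt u x b) (hbd : b ≤ d) :
    Bispecial u (factorAt x b (d - b)) :=
  accident_bispecial_general hD H hne hprim u hu x d b hd hacc hbd
end

section
/- Let H be the Thue–Morse substitution and let x ∈ {0,1}^ℕ \ K with δ(x) = p ≥ 3. Then for every integer n ≥ 0 and every k with 0 ≤ k ≤ 2^n − 1, δ(σ^k(H^n(x))) = p·2^n − k. -/
open Filter Topology MeasureTheory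

variable {A : Type*}

/-- The Thue–Morse substitution on the alphabet `Bool` (`false = 0`, `true = 1`):
`0 ↦ 01`, `1 ↦ 10`. -/
def tm : Bool → List Bool := fun a => if a then [true, false] else [false, true]

section Aux

lemma tm_eq (a : Bool) : tm a = [a, !a] := by cases a <;> rfl

lemma wordMap_tm_cons (a : Bool) (l : List Bool) :
    wordMap tm (a :: l) = a :: (!a) :: wordMap tm l := by
  show (a :: l).flatMap tm = _
  rw [List.flatMap_cons, tm_eq]
  rfl

lemma wordMap_tm_getD (l : List Bool) (t : ℕ) (ht : t < l.length) (d : Bool) :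
    (wordMap tm l).getD (2 * t) d = l.getD t d ∧
    (wordMap tm l).getD (2 * t + 1) d = !(l.getD t d) := by
  induction l generalizing t with
  | nil => simp at ht
  | cons a l ih =>
    rw [wordMap_tm_cons]
    cases t with
    | zero => simp
    | succ t =>
      rw [show 2 * (t + 1) = (2 * t + 1) + 1 from by ring]
      simp only [List.getD_cons_succ]
      exact ih t (by simpa using ht)

lemma mapRange_getD (y : ℕ → Bool) (n t : ℕ) (h : t < n) (d : Bool) :
    ((List.range n).map y).getD t d = y t := by
  rw [List.getD_eq_getElem _ _ (by simpa using h)]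
  simp

lemma substSeq_tm_even (y : ℕ → Bool) (t : ℕ) : substSeq tm y (2 * t) = y t := by
  show (wordMap tm ((List.range (2 * t + 1)).map y)).getD (2 * t) (y 0) = y t
  rw [(wordMap_tm_getD ((List.range (2 * t + 1)).map y) t (by simp; omega) (y 0)).1]
  exact mapRange_getD y (2 * t + 1) t (by omega) (y 0)

lemma substSeq_tm_odd (y : ℕ → Bool) (t : ℕ) : substSeq tm y (2 * t + 1) = !(y t) := by
  show (wordMap tm ((List.range (2 * t + 1 + 1)).map y)).getD (2 * t + 1) (y 0) = !(y t)
  rw [(wordMap_tm_getD ((List.range (2 * t + 2)).map y) t (by simp; omega) (y 0)).2]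
  rw [mapRange_getD y (2 * t + 2) t (by omega) (y 0)]

/-- Pointwise "prefix of length n occurs at i in u" predicate. -/
def Emb (u z : ℕ → Bool) (n : ℕ) : Prop := ∃ i, ∀ j < n, z j = u (i + j)

lemma emb_iff (u z : ℕ → Bool) (n : ℕ) : prefixWord z n ∈ Lang u ↔ Emb u z n := by
  have hlen : (prefixWord z n).length = n := by simp [prefixWord]
  constructor
  · rintro ⟨i, hi⟩
    rw [hlen] at hi
    refine ⟨i, fun j hj => ?_⟩
    have h1 := congrArg (fun l => l.getD j false) hi
    simp only [prefixWord, factorAt] at h1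
    rwa [mapRange_getD z n j hj, mapRange_getD _ n j hj] at h1
  · rintro ⟨i, hi⟩
    refine ⟨i, ?_⟩
    rw [hlen]
    simp only [prefixWord, factorAt]
    exact List.map_congr_left fun j hj => hi j (List.mem_range.mp hj)

lemma emb_mono (u z : ℕ → Bool) {m n : ℕ} (h : m ≤ n) (he : Emb u z n) : Emb u z m :=
  ⟨he.choose, fun j hj => he.choose_spec j (lt_of_lt_of_le hj h)⟩

lemma delta_eq_of (u z : ℕ → Bool) (q : ℕ) (h1 : Emb u z q) (h2 : ¬ Emb u z (q + 1)) :
    delta u z = q := by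
  have hub : ∀ m ∈ {n | prefixWord z n ∈ Lang u}, m ≤ q := by
    intro m hm
    by_contra hc
    exact h2 (emb_mono u z (by omega) ((emb_iff u z m).mp hm))
  have hq : q ∈ {n | prefixWord z n ∈ Lang u} := (emb_iff u z q).mpr h1
  exact le_antisymm (csSup_le ⟨q, hq⟩ hub) (le_csSup ⟨q, hub⟩ hq)

lemma endAt_of_delta (u x : ℕ → Bool) (p : ℕ) (hp : delta u x = p) (hp0 : 0 < p) :
    Emb u x p ∧ ¬ Emb u x (p + 1) := by
  unfold delta at hp
  have hBdd : BddAbove {n | prefixWord x n ∈ Lang u} := by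
    by_contra h
    have h0 : sSup {n | prefixWord x n ∈ Lang u} = sSup (∅ : Set ℕ) :=
      csSup_of_not_bddAbove h
    rw [csSup_empty] at h0
    simp only [Nat.bot_eq_zero] at h0
    omega
  have hne : {n | prefixWord x n ∈ Lang u}.Nonempty :=
    ⟨0, ⟨0, by simp [prefixWord, factorAt]⟩⟩
  have hmem := Nat.sSup_mem hne hBdd
  rw [hp] at hmem
  refine ⟨(emb_iff u x p).mp hmem, fun h => ?_⟩
  have h1 : p + 1 ∈ {n | prefixWord x n ∈ Lang u} := (emb_iff u x (p + 1)).mpr h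
  have := le_csSup hBdd h1
  omega

end Aux

section Core

variable {u : ℕ → Bool} (hu : IsFixedPointSubst tm u)

include hu

lemma u_even (t : ℕ) : u (2 * t) = u t := by
  conv_lhs => rw [← hu]
  exact substSeq_tm_even u t

lemma u_odd (t : ℕ) : u (2 * t + 1) = !(u t) := by
  conv_lhs => rw [← hu]
  exact substSeq_tm_odd u t

/-- No three consecutive equal letters in the TM fixed point. -/
lemma no_three (j : ℕ) (h1 : u j = u (j + 1)) (h2 : u (j + 1) = u (j + 2)) : False := by
  rcases Nat.even_or_odd j with ⟨t, ht⟩ | ⟨t, ht⟩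
  · have e1 : u j = u t := by rw [show j = 2 * t from by omega]; exact u_even hu t
    have e2 : u (j + 1) = !(u t) := by
      rw [show j + 1 = 2 * t + 1 from by omega]; exact u_odd hu t
    rw [e1, e2] at h1
    simp at h1
  · have e1 : u (j + 1) = u (t + 1) := by
      rw [show j + 1 = 2 * (t + 1) from by omega]; exact u_even hu (t + 1)
    have e2 : u (j + 2) = !(u (t + 1)) := by
      rw [show j + 2 = 2 * (t + 1) + 1 from by omega]; exact u_odd hu (t + 1)
    rw [e1, e2] at h2
    simp at h2

/-- Main step, even part: `δ(H(y)) = 2q`. -/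
lemma step_even (y : ℕ → Bool) (q : ℕ) (hq : 3 ≤ q)
    (h1 : Emb u y q) (h2 : ¬ Emb u y (q + 1)) :
    Emb u (substSeq tm y) (2 * q) ∧ ¬ Emb u (substSeq tm y) (2 * q + 1) := by
  constructor
  · obtain ⟨i, h⟩ := h1
    refine ⟨2 * i, fun j hj => ?_⟩
    rcases Nat.even_or_odd j with ⟨t, ht⟩ | ⟨t, ht⟩
    · have htq : t < q := by omega
      rw [show j = 2 * t from by omega, substSeq_tm_even,
        show 2 * i + 2 * t = 2 * (i + t) from by ring, u_even hu, h t htq]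
    · have htq : t < q := by omega
      rw [show j = 2 * t + 1 from by omega, substSeq_tm_odd,
        show 2 * i + (2 * t + 1) = 2 * (i + t) + 1 from by ring, u_odd hu, h t htq]
  · rintro ⟨i, h⟩
    rcases Nat.even_or_odd i with ⟨m, hm⟩ | ⟨m, hm⟩
    · -- aligned occurrence: extend the prefix of y, contradiction
      apply h2
      refine ⟨m, fun t ht => ?_⟩
      have := h (2 * t) (by omega)
      rwa [substSeq_tm_even, show i + 2 * t = 2 * (m + t) from by omega,
        u_even hu] at this
    · -- misaligned: u has three consecutive equal letters
      have key : ∀ t, t < q → u (m + t) = u (m + t + 1) := by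
        intro t ht
        have e0 := h (2 * t) (by omega)
        rw [substSeq_tm_even, show i + 2 * t = 2 * (m + t) + 1 from by omega,
          u_odd hu] at e0
        have e1 := h (2 * t + 1) (by omega)
        rw [substSeq_tm_odd, show i + (2 * t + 1) = 2 * (m + t + 1) from by omega,
          u_even hu, e0] at e1
        exact (by simpa using e1.symm : u (m + t + 1) = u (m + t)).symm
      exact no_three hu m (key 0 (by omega)) (by simpa using key 1 (by omega))

/-- Main step, odd part: `δ(σ(H(y))) = 2q - 1`. -/
lemma step_odd (y : ℕ → Bool) (q : ℕ) (hq : 3 ≤ q)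
    (h1 : Emb u y q) (h2 : ¬ Emb u y (q + 1)) :
    Emb u (shift (substSeq tm y)) (2 * q - 1) ∧ ¬ Emb u (shift (substSeq tm y)) (2 * q) := by
  constructor
  · obtain ⟨i, h⟩ := (step_even hu y q hq h1 h2).1
    refine ⟨i + 1, fun j hj => ?_⟩
    have := h (j + 1) (by omega)
    rw [show i + 1 + j = i + (j + 1) from by ring]
    exact this
  · rintro ⟨i, h⟩
    -- h : ∀ j < 2q, substSeq tm y (j+1) = u (i + j)
    rcases Nat.even_or_odd i with ⟨m, hm⟩ | ⟨m, hm⟩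
    · -- i even: misaligned occurrence forces three equal letters
      have key : ∀ t, t + 1 < q → u (m + t) = u (m + t + 1) := by
        intro t ht
        have e0 := h (2 * t + 1) (by omega)
        simp only [shift] at e0
        rw [show 2 * t + 1 + 1 = 2 * (t + 1) from by ring, substSeq_tm_even,
          show i + (2 * t + 1) = 2 * (m + t) + 1 from by omega, u_odd hu] at e0
        have e1 := h (2 * t + 2) (by omega)
        simp only [shift] at e1
        rw [show 2 * t + 2 + 1 = 2 * (t + 1) + 1 from by ring, substSeq_tm_odd,
          show i + (2 * t + 2) = 2 * (m + t + 1) from by omega, u_even hu, e0] at e1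
        exact (by simpa using e1.symm : u (m + t + 1) = u (m + t)).symm
      exact no_three hu m (key 0 (by omega)) (by simpa using key 1 (by omega))
    · -- i odd: extend the prefix of y to length q+1
      apply h2
      refine ⟨m, fun t ht => ?_⟩
      cases t with
      | zero =>
        have e0 := h 0 (by omega)
        simp only [shift] at e0
        rw [show (0 : ℕ) + 1 = 2 * 0 + 1 from rfl, substSeq_tm_odd,
          show i + 0 = 2 * m + 1 from by omega, u_odd hu] at e0
        simpa using e0
      | succ t =>
        have e1 := h (2 * t + 1) (by omega)
        simp only [shift] at e1
        rw [show 2 * t + 1 + 1 = 2 * (t + 1) from by ring, substSeq_tm_even,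
          show i + (2 * t + 1) = 2 * (m + t + 1) from by omega, u_even hu] at e1
        rw [show m + (t + 1) = m + t + 1 from by ring]
        exact e1

end Core

lemma shift_two_substSeq (z : ℕ → Bool) :
    shift (shift (substSeq tm z)) = substSeq tm (shift z) := by
  funext n
  rcases Nat.even_or_odd n with ⟨t, ht⟩ | ⟨t, ht⟩
  · have : shift (shift (substSeq tm z)) n = substSeq tm z (2 * (t + 1)) := by
      simp only [shift]; congr 1; omega
    rw [this, substSeq_tm_even, show n = 2 * t from by omega, substSeq_tm_even]
    rfl
  · have : shift (shift (substSeq tm z)) n = substSeq tm z (2 * (t + 1) + 1) := by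
      simp only [shift]; congr 1; omega
    rw [this, substSeq_tm_odd, show n = 2 * t + 1 from by omega, substSeq_tm_odd]
    rfl

lemma shift_iter_substSeq (z : ℕ → Bool) (k : ℕ) :
    shift^[2 * k] (substSeq tm z) = substSeq tm (shift^[k] z) := by
  induction k generalizing z with
  | zero => rfl
  | succ k ih =>
    rw [show 2 * (k + 1) = 2 + 2 * k from by ring, Function.iterate_add_apply,
      ih z, show (2 : ℕ) = 1 + 1 from rfl, Function.iterate_add_apply]
    simp only [Function.iterate_one]
    rw [shift_two_substSeq]
    congr 1
    rw [← Function.iterate_succ_apply' shift k z, Function.iterate_succ_apply]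

/-- For Thue–Morse and `x ∉ K` with `δ(x) = p ≥ 3`:
`δ(σᵏ(Hⁿ(x))) = p·2ⁿ - k` for all `n` and all `0 ≤ k ≤ 2ⁿ - 1`. -/
theorem thue_morse_delta_iterate
    (u : ℕ → Bool) (hu : IsFixedPointSubst tm u)
    (x : ℕ → Bool) (hx : x ∉ orbitClosure u)
    (p : ℕ) (hp : delta u x = p) (hp3 : 3 ≤ p) :
    ∀ n k : ℕ, k ≤ 2 ^ n - 1 →
      delta u (shift^[k] ((substSeq tm)^[n] x)) = p * 2 ^ n - k := by
  have h0 := endAt_of_delta u x p hp (by omega)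
  have key : ∀ n, ∀ k ≤ 2 ^ n - 1,
      Emb u (shift^[k] ((substSeq tm)^[n] x)) (p * 2 ^ n - k) ∧
      ¬ Emb u (shift^[k] ((substSeq tm)^[n] x)) (p * 2 ^ n - k + 1) := by
    intro n
    induction n with
    | zero =>
      intro k hk
      have hk0 : k = 0 := by simpa using hk
      subst hk0
      simpa using h0
    | succ n ih =>
      intro k hk
      have e1 : 1 ≤ 2 ^ n := Nat.one_le_two_pow
      have e2 : 2 ^ (n + 1) = 2 * 2 ^ n := by ring
      have e3 : p * 2 ^ (n + 1) = 2 * (p * 2 ^ n) := by rw [e2]; ring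
      have e4 : 3 * 2 ^ n ≤ p * 2 ^ n := Nat.mul_le_mul_right _ hp3
      set k' := k / 2 with hk'def
      have hkr : k % 2 < 2 := Nat.mod_lt k (by norm_num)
      have hdm := Nat.div_add_mod k 2
      have hk' : k' ≤ 2 ^ n - 1 := by omega
      obtain ⟨H1, H2⟩ := ih k' hk'
      have hq3 : 3 ≤ p * 2 ^ n - k' := by omega
      have hseq : shift^[2 * k'] ((substSeq tm)^[n + 1] x)
          = substSeq tm (shift^[k'] ((substSeq tm)^[n] x)) := by
        rw [Function.iterate_succ_apply' (substSeq tm) n x]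
        exact shift_iter_substSeq _ k'
      have hr2 : k % 2 = 0 ∨ k % 2 = 1 := by omega
      rcases hr2 with hr | hr
      · have hk2 : k = 2 * k' := by omega
        obtain ⟨S1, S2⟩ := step_even hu _ _ hq3 H1 H2
        rw [hk2, hseq,
          show p * 2 ^ (n + 1) - 2 * k' = 2 * (p * 2 ^ n - k') from by omega]
        exact ⟨S1, S2⟩
      · have hk2 : k = 1 + 2 * k' := by omega
        obtain ⟨S1, S2⟩ := step_odd hu _ _ hq3 H1 H2
        rw [hk2, Function.iterate_add_apply, hseq]
        simp only [Function.iterate_one]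
        rw [show p * 2 ^ (n + 1) - (1 + 2 * k') = 2 * (p * 2 ^ n - k') - 1 from by omega]
        refine ⟨S1, ?_⟩
        rw [show 2 * (p * 2 ^ n - k') - 1 + 1 = 2 * (p * 2 ^ n - k') from by omega]
        exact S2
  intro n k hk
  obtain ⟨H1, H2⟩ := key n k hk
  exact delta_eq_of u _ _ H1 H2
end
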